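/- Let E be a finite-dimensional real inner product space, let S_1, …, S_K be linear subspaces of E each spanned by an orthonormal family, and fix a class index y with orthonormal basis (u_1, …, u_{d_y}) of S_y. Let z ∈ E admit a decomposition z = s + e with s ∈ S_y, ‖e‖ ≤ ε, and ‖s‖ ≥ γ > 0. Suppose there is η ∈ [0, 1) such that for every j ≠ y, the orthonormal basis (v_1, …, v_{d_j}) of S_j satisfies Σ_i Σ_ℓ ⟨u_i, v_ℓ⟩² ≤ η. Then dist(z, S_y) ≤ ε, for every j ≠ y one has dist(z, S_j) ≥ γ · √(1 − η) − ε, and consequently for every j ≠ y, dist(z, S_j) − dist(z, S_y) ≥ γ · √(1 − η) − 2ε. -/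

import Mathlib

/-!
Write `P_k` for the orthogonal projection onto `S_k`. Because `s ∈ S_y`, each coefficient
`⟪v_ℓ, s⟫ = ⟪P_y v_ℓ, s⟫` is bounded by `‖P_y v_ℓ‖ ‖s‖`, and `‖P_y v_ℓ‖² = ∑ᵢ ⟪u_i, v_ℓ⟫²`.
Summing over `ℓ` gives `‖P_j s‖² ≤ η ‖s‖²`, so by Pythagoras
`dist(s, S_j)² = ‖s‖² - ‖P_j s‖² ≥ (1 - η) ‖s‖²`. Distance to a set is 1-Lipschitz, so passing
from `s` to `z = s + e` costs at most `‖e‖ ≤ ε`.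
-/

open Submodule Metric
open scoped InnerProductSpace

section

variable {𝕜 E : Type*} [RCLike 𝕜] [NormedAddCommGroup E] [InnerProductSpace 𝕜 E]

namespace Submodule

variable (K : Submodule 𝕜 E) [K.HasOrthogonalProjection]

theorem infDist_eq_norm_sub_starProjection (x : E) :
    infDist x (K : Set E) = ‖x - K.starProjection x‖ := by
  rw [starProjection_minimal, infDist_eq_iInf]
  simp only [dist_eq_norm]
  rfl

theorem infDist_sq_eq (x : E) :
    infDist x (K : Set E) ^ 2 = ‖x‖ ^ 2 - ‖K.starProjection x‖ ^ 2 := by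
  rw [K.norm_sq_eq_add_norm_sq_starProjection x, infDist_eq_norm_sub_starProjection,
    starProjection_orthogonal_val]
  ring

theorem norm_mul_sqrt_le_infDist {x : E} {η : ℝ} (h : ‖K.starProjection x‖ ^ 2 ≤ ‖x‖ ^ 2 * η) :
    ‖x‖ * √(1 - η) ≤ infDist x (K : Set E) :=
  calc ‖x‖ * √(1 - η) = √(‖x‖ ^ 2 * (1 - η)) := by
        rw [Real.sqrt_mul (sq_nonneg _), Real.sqrt_sq (norm_nonneg _)]
    _ ≤ √(‖x‖ ^ 2 - ‖K.starProjection x‖ ^ 2) := Real.sqrt_le_sqrt (by linarith)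
    _ = infDist x (K : Set E) := by rw [← K.infDist_sq_eq, Real.sqrt_sq infDist_nonneg]

variable {K} in
theorem norm_inner_le_norm_starProjection_mul_norm {s : E} (hs : s ∈ K) (w : E) :
    ‖⟪w, s⟫_𝕜‖ ≤ ‖K.starProjection w‖ * ‖s‖ := by
  rw [← K.starProjection_eq_self_iff.2 hs, ← inner_starProjection_left_eq_right,
    K.starProjection_eq_self_iff.2 hs]
  exact norm_inner_le_norm _ _

end Submodule

namespace Orthonormal

variable {ι : Type*} [Fintype ι] {v : ι → E}

theorem starProjection_span_eq_sum (hv : Orthonormal 𝕜 v)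
    [(span 𝕜 (Set.range v)).HasOrthogonalProjection] (x : E) :
    (span 𝕜 (Set.range v)).starProjection x = ∑ i, ⟪v i, x⟫_𝕜 • v i := by
  refine eq_starProjection_of_mem_of_inner_eq_zero
    (sum_mem fun i _ => smul_mem _ _ (subset_span ⟨i, rfl⟩)) fun w hw => ?_
  have : span 𝕜 (Set.range v) ≤ LinearMap.ker (innerₛₗ 𝕜 (x - ∑ i, ⟪v i, x⟫_𝕜 • v i)) := by
    rw [span_le]
    rintro _ ⟨i, rfl⟩
    rw [SetLike.mem_coe, LinearMap.mem_ker, innerₛₗ_apply_apply, inner_sub_left,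
      hv.inner_left_fintype, inner_conj_symm, sub_self]
  exact this hw

theorem norm_sq_starProjection_span (hv : Orthonormal 𝕜 v)
    [(span 𝕜 (Set.range v)).HasOrthogonalProjection] (x : E) :
    ‖(span 𝕜 (Set.range v)).starProjection x‖ ^ 2 = ∑ i, ‖⟪v i, x⟫_𝕜‖ ^ 2 := by
  rw [hv.starProjection_span_eq_sum, @norm_sq_eq_re_inner 𝕜, hv.inner_sum, map_sum]
  simp only [RCLike.conj_mul, ← RCLike.ofReal_pow, RCLike.ofReal_re]

theorem norm_sq_starProjection_span_le {κ : Type*} [Fintype κ] {u : κ → E}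
    (hu : Orthonormal 𝕜 u) (hv : Orthonormal 𝕜 v) [(span 𝕜 (Set.range u)).HasOrthogonalProjection]
    [(span 𝕜 (Set.range v)).HasOrthogonalProjection] {s : E} (hs : s ∈ span 𝕜 (Set.range u)) :
    ‖(span 𝕜 (Set.range v)).starProjection s‖ ^ 2 ≤ ‖s‖ ^ 2 * ∑ k, ∑ i, ‖⟪u k, v i⟫_𝕜‖ ^ 2 :=
  calc ‖(span 𝕜 (Set.range v)).starProjection s‖ ^ 2 = ∑ i, ‖⟪v i, s⟫_𝕜‖ ^ 2 :=
        hv.norm_sq_starProjection_span s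
    _ ≤ ∑ i, (‖(span 𝕜 (Set.range u)).starProjection (v i)‖ * ‖s‖) ^ 2 :=
        Finset.sum_le_sum fun i _ => pow_le_pow_left₀ (norm_nonneg _)
          (norm_inner_le_norm_starProjection_mul_norm hs (v i)) 2
    _ = ‖s‖ ^ 2 * ∑ k, ∑ i, ‖⟪u k, v i⟫_𝕜‖ ^ 2 := by
        simp_rw [mul_pow, hu.norm_sq_starProjection_span]
        rw [← Finset.sum_mul, Finset.sum_comm, mul_comm]

end Orthonormal

end

theorem stmt_14_general {E : Type*} [NormedAddCommGroup E] [InnerProductSpace ℝ E]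
    [FiniteDimensional ℝ E]
    (K : ℕ) (S : Fin K → Submodule ℝ E)
    (d : Fin K → ℕ) (V : ∀ k, Fin (d k) → E)
    (hortho : ∀ k, Orthonormal ℝ (V k))
    (hspan : ∀ k, S k = Submodule.span ℝ (Set.range (V k)))
    (y : Fin K)
    (z s e : E) (ε γ η : ℝ)
    (hz : z = s + e) (hs : s ∈ S y) (he : ‖e‖ ≤ ε)
    (hsγ : ‖s‖ ≥ γ)
    (hrep : ∀ j, j ≠ y → ∑ i, ∑ l, (inner ℝ (V y i) (V j l) : ℝ) ^ 2 ≤ η) :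
    Metric.infDist z (S y : Set E) ≤ ε ∧
      (∀ j, j ≠ y →
        Metric.infDist z (S j : Set E) ≥ γ * Real.sqrt (1 - η) - ε) ∧
      (∀ j, j ≠ y →
        Metric.infDist z (S j : Set E) - Metric.infDist z (S y : Set E) ≥
          γ * Real.sqrt (1 - η) - 2 * ε) := by
  obtain rfl : S = fun k => span ℝ (Set.range (V k)) := funext hspan
  have hdist : dist z s = ‖e‖ := by rw [hz, dist_eq_norm, add_sub_cancel_left]
  have hy : infDist z (span ℝ (Set.range (V y)) : Set E) ≤ ε :=
    (infDist_le_dist_of_mem hs).trans (hdist ▸ he)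
  have hj (j : Fin K) (hj : j ≠ y) :
      infDist z (span ℝ (Set.range (V j)) : Set E) ≥ γ * √(1 - η) - ε := by
    have hrep' : ∑ i, ∑ l, ‖⟪V y i, V j l⟫_ℝ‖ ^ 2 ≤ η := by
      simpa only [Real.norm_eq_abs, sq_abs] using hrep j hj
    have hs_far := (span ℝ (Set.range (V j))).norm_mul_sqrt_le_infDist <|
      ((hortho y).norm_sq_starProjection_span_le (hortho j) hs).trans
        (mul_le_mul_of_nonneg_left hrep' (sq_nonneg _))
    have hγs : γ * √(1 - η) ≤ ‖s‖ * √(1 - η) := mul_le_mul_of_nonneg_right hsγ (Real.sqrt_nonneg _)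
    have hz_near := infDist_le_infDist_add_dist (x := s) (y := z)
      (s := (span ℝ (Set.range (V j)) : Set E))
    rw [dist_comm, hdist] at hz_near
    linarith
  exact ⟨hy, hj, fun j hne => by linarith [hj j hne]⟩

/-- **Repulsion implies subspace margin lower bound.**
Each class subspace `S k` is spanned by an orthonormal family `V k`. If `z = s + e`
with `s ∈ S_y`, `‖e‖ ≤ ε`, `‖s‖ ≥ γ > 0`, and for every `j ≠ y` the repulsion
penalty satisfies `Σᵢ Σₗ ⟨(V y)ᵢ, (V j)ₗ⟩² ≤ η` with `η ∈ [0,1)`, then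
`dist(z, S_y) ≤ ε`, `dist(z, S_j) ≥ γ √(1 − η) − ε` for all `j ≠ y`, and consequently
`dist(z, S_j) − dist(z, S_y) ≥ γ √(1 − η) − 2ε` for all `j ≠ y`. -/
theorem stmt_14 {E : Type*} [NormedAddCommGroup E] [InnerProductSpace ℝ E]
    [FiniteDimensional ℝ E]
    (K : ℕ) (S : Fin K → Submodule ℝ E)
    (d : Fin K → ℕ) (V : ∀ k, Fin (d k) → E)
    (hortho : ∀ k, Orthonormal ℝ (V k))
    (hspan : ∀ k, S k = Submodule.span ℝ (Set.range (V k)))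
    (y : Fin K)
    (z s e : E) (ε γ η : ℝ)
    (hz : z = s + e) (hs : s ∈ S y) (he : ‖e‖ ≤ ε)
    (hγ : 0 < γ) (hsγ : ‖s‖ ≥ γ)
    (hη0 : 0 ≤ η) (hη1 : η < 1)
    (hrep : ∀ j, j ≠ y → ∑ i, ∑ l, (inner ℝ (V y i) (V j l) : ℝ) ^ 2 ≤ η) :
    Metric.infDist z (S y : Set E) ≤ ε ∧
      (∀ j, j ≠ y →
        Metric.infDist z (S j : Set E) ≥ γ * Real.sqrt (1 - η) - ε) ∧
      (∀ j, j ≠ y →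
        Metric.infDist z (S j : Set E) - Metric.infDist z (S y : Set E) ≥
          γ * Real.sqrt (1 - η) - 2 * ε) :=
  stmt_14_general K S d V hortho hspan y z s e ε γ η hz hs he hsγ hrep
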